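/- Let f satisfy the relative smoothness condition with constant L_d(f), let L ≥ L_d(f) and δ ≥ 0, and let {x_k}_{k≥0} be a sequence generated by the Inexact Gradient Method with Memory: x_0 ∈ int(dom ψ), and for each k ≥ 0 there exist m_k ≥ 1 points z_{k,1}, …, z_{k,m_k} ∈ dom ψ with x_k among them, and λ̄_k ∈ Δ_{m_k} satisfying ⟨λ̄_k − λ, f_{*,k} − G_kᵀ x_{k+1}⟩ ≤ δ for all λ ∈ Δ_{m_k}, where x_{k+1} = y*_L(L∇d(x_k) − G_k λ̄_k). Then for any T ≥ 1 and any y ∈ dom ψ: (1/T) Σ_{k=1}^T F(x_k) ≤ F(y) + (L/T) β_d(x_0, y) + δ, where F = f + ψ. -/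

import Mathlib

/-!
Each step of the method is a Bregman proximal step on the convex combination `ℓ_k` of the linear
models of `f` at the bundle points. Optimality of `x_{k+1}` and the three-point identity give
`ℓ_k(x_{k+1}) + ψ(x_{k+1}) + L β(x_k, x_{k+1}) + L β(x_{k+1}, y) ≤ ℓ_k(y) + ψ(y) + L β(x_k, y)`;
relative smoothness at `x_k` together with approximate stationarity (tested against the vertex of
the simplex at `x_k`) bounds `f(x_{k+1})` by `ℓ_k(x_{k+1}) + L β(x_k, x_{k+1}) + δ`, and
`ℓ_k ≤ f` by convexity. Hence `F(x_{k+1}) + L β(x_{k+1}, y) ≤ F(y) + δ + L β(x_k, y)`, which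
telescopes.
-/

open Set

section

variable {E : Type*} [NormedAddCommGroup E] [NormedSpace ℝ E]

lemma HasDerivAt.nonneg_of_isMinOn_Icc {g : ℝ → ℝ} {g' : ℝ} (hg : HasDerivAt g g' 0)
    (hmin : IsMinOn g (Icc 0 1) 0) : 0 ≤ g' := by
  have hcone : (1 : ℝ) ∈ posTangentConeAt (Icc (0 : ℝ) 1) 0 :=
    mem_posTangentConeAt_of_segment_subset (by simp [segment_eq_Icc])
  simpa using hmin.localize.hasFDerivWithinAt_nonneg hg.hasFDerivAt.hasFDerivWithinAt hcone

lemma ConvexOn.fderiv_le_sub {C : Set E} {g : E → ℝ} {g' : E →L[ℝ] ℝ} (hg : ConvexOn ℝ C g)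
    {x y : E} (hx : x ∈ C) (hy : y ∈ C) (hd : HasFDerivAt g g' x) :
    g' (y - x) ≤ g y - g x := by
  let h : ℝ → ℝ := fun t => (1 - t) * g x + t * g y - g (x + t • (y - x))
  have hderiv : HasDerivAt h (g y - g x - g' (y - x)) 0 := by
    have hline : HasDerivAt (fun t : ℝ => g (x + t • (y - x))) (g' (y - x)) 0 :=
      hd.hasLineDerivAt (y - x)
    exact ((((hasDerivAt_id' (0 : ℝ)).const_sub 1).mul_const (g x)).add
      ((hasDerivAt_id' (0 : ℝ)).mul_const (g y)) |>.sub hline).congr_deriv (by ring)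
  have hmin : IsMinOn h (Icc 0 1) 0 := isMinOn_iff.2 fun t ⟨ht0, ht1⟩ => by
    have hseg : x + t • (y - x) = (1 - t) • x + t • y := by module
    have hconv := hg.2 hx hy (sub_nonneg.2 ht1) ht0 (by ring)
    simp only [smul_eq_mul, ← hseg] at hconv
    simp only [h, zero_smul, add_zero]
    linarith
  linarith [hderiv.nonneg_of_isMinOn_Icc hmin]

lemma IsMinOn.sub_le_fderiv_of_convexOn {S : Set E} {φ ψ : E → ℝ} {φ' : E →L[ℝ] ℝ} {u y : E}
    (hS : Convex ℝ S) (hψ : ConvexOn ℝ S ψ) (hmin : IsMinOn (φ + ψ) S u)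
    (hφ : HasFDerivAt φ φ' u) (hu : u ∈ S) (hy : y ∈ S) :
    ψ u - ψ y ≤ φ' (y - u) := by
  let h : ℝ → ℝ := fun t => φ (u + t • (y - u)) + ((1 - t) * ψ u + t * ψ y)
  have hderiv : HasDerivAt h (φ' (y - u) + (ψ y - ψ u)) 0 := by
    have hline : HasDerivAt (fun t : ℝ => φ (u + t • (y - u))) (φ' (y - u)) 0 :=
      hφ.hasLineDerivAt (y - u)
    exact (hline.add ((((hasDerivAt_id' (0 : ℝ)).const_sub 1).mul_const (ψ u)).add
      ((hasDerivAt_id' (0 : ℝ)).mul_const (ψ y)))).congr_deriv (by ring)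
  have hmin' : IsMinOn h (Icc 0 1) 0 := isMinOn_iff.2 fun t ⟨ht0, ht1⟩ => by
    have hseg : u + t • (y - u) = (1 - t) • u + t • y := by module
    have hmem : u + t • (y - u) ∈ S := hseg ▸ hS hu hy (sub_nonneg.2 ht1) ht0 (by ring)
    have hconv := hψ.2 hu hy (sub_nonneg.2 ht1) ht0 (by ring)
    have hle := isMinOn_iff.1 hmin _ hmem
    simp only [smul_eq_mul, ← hseg, Pi.add_apply] at hconv hle
    simp only [h, zero_smul, add_zero]
    linarith
  linarith [hderiv.nonneg_of_isMinOn_Icc hmin']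

def bregman (d : E → ℝ) (d' : E → E →L[ℝ] ℝ) (x y : E) : ℝ :=
  d y - d x - d' x (y - x)

lemma bregman_nonneg {C : Set E} {d : E → ℝ} {d' : E → E →L[ℝ] ℝ} (hd : ConvexOn ℝ C d)
    {x y : E} (hx : x ∈ C) (hy : y ∈ C) (hdx : HasFDerivAt d (d' x) x) :
    0 ≤ bregman d d' x y :=
  sub_nonneg.2 (hd.fderiv_le_sub hx hy hdx)

lemma bregman_three_point (d : E → ℝ) (d' : E → E →L[ℝ] ℝ) (x z y : E) :
    bregman d d' x y - bregman d d' z y - bregman d d' x z = (d' z - d' x) (y - z) := by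
  simp only [bregman, sub_apply, map_sub]
  ring

lemma bregman_prox_three_point {S : Set E} {d ψ : E → ℝ} {d' : E → E →L[ℝ] ℝ}
    {g : E →L[ℝ] ℝ} {L : ℝ} {x x₁ y : E} (hS : Convex ℝ S) (hψ : ConvexOn ℝ S ψ)
    (hd : HasFDerivAt d (d' x₁) x₁)
    (hmax : ∀ w ∈ S, (L • d' x - g) w - L * d w - ψ w ≤
      (L • d' x - g) x₁ - L * d x₁ - ψ x₁)
    (hx₁ : x₁ ∈ S) (hy : y ∈ S) :
    g x₁ + ψ x₁ + L * (bregman d d' x x₁ + bregman d d' x₁ y) ≤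
      g y + ψ y + L * bregman d d' x y := by
  have hmin : IsMinOn ((fun w => L * d w - (L • d' x - g) w) + ψ) S x₁ :=
    isMinOn_iff.2 fun w hw => by
      simp only [Pi.add_apply]
      linarith [hmax w hw]
  have hopt := hmin.sub_le_fderiv_of_convexOn hS hψ
    ((hd.const_mul L).sub (L • d' x - g).hasFDerivAt) hx₁ hy
  have h3 := bregman_three_point d d' x x₁ y
  simp only [sub_apply, smul_apply, smul_eq_mul, map_sub] at hopt h3
  linear_combination hopt - L * h3

section LinearModel

variable {ι : Type*} [Fintype ι]

def linModel (f : E → ℝ) (f' : E → E →L[ℝ] ℝ) (z : ι → E) (lam : ι → ℝ) (w : E) : ℝ :=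
  ∑ i, lam i * (f (z i) + f' (z i) (w - z i))

lemma linModel_sub_linModel (f : E → ℝ) (f' : E → E →L[ℝ] ℝ) (z : ι → E) (lam : ι → ℝ)
    (v w : E) :
    linModel f f' z lam v - linModel f f' z lam w =
      (∑ i, lam i • f' (z i)) v - (∑ i, lam i • f' (z i)) w := by
  simp only [linModel, sum_apply, smul_apply, smul_eq_mul, ← Finset.sum_sub_distrib, map_sub]
  exact Finset.sum_congr rfl fun i _ => by ring

lemma linModel_le {U : Set E} {f : E → ℝ} {f' : E → E →L[ℝ] ℝ} {z : ι → E} {lam : ι → ℝ}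
    {w : E} (hf : ConvexOn ℝ U f) (hf' : ∀ i, HasFDerivAt f (f' (z i)) (z i))
    (hz : ∀ i, z i ∈ U) (hw : w ∈ U) (hlam : lam ∈ stdSimplex ℝ ι) :
    linModel f f' z lam w ≤ f w :=
  calc linModel f f' z lam w ≤ ∑ i, lam i * f w :=
        Finset.sum_le_sum fun i _ => mul_le_mul_of_nonneg_left
          (by linarith [hf.fderiv_le_sub (hz i) hw (hf' i)]) (hlam.1 i)
    _ = f w := by rw [← Finset.sum_mul, hlam.2, one_mul]

lemma sum_sub_single_mul_eq_sub_linModel [DecidableEq ι] (f : E → ℝ) (f' : E → E →L[ℝ] ℝ)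
    (z : ι → E) (lam : ι → ℝ) (j : ι) (w : E) :
    ∑ i, (lam i - (Pi.single j 1 : ι → ℝ) i) * (f' (z i) (z i) - f (z i) - f' (z i) w) =
      f (z j) + f' (z j) (w - z j) - linModel f f' z lam w := by
  have hmodel : linModel f f' z lam w =
      -∑ i, lam i * (f' (z i) (z i) - f (z i) - f' (z i) w) := by
    rw [linModel, ← Finset.sum_neg_distrib]
    exact Finset.sum_congr rfl fun i _ => by rw [map_sub]; ring
  simp only [hmodel, sub_mul, Finset.sum_sub_distrib, Pi.single_apply, ite_mul, one_mul,
    zero_mul, Finset.sum_ite_eq', Finset.mem_univ, if_true, map_sub]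
  ring

end LinearModel

lemma average_le_of_forall_add_succ_le {a b : ℕ → ℝ} {c : ℝ} (hb : ∀ k, 0 ≤ b k)
    (hstep : ∀ k, a (k + 1) + b (k + 1) ≤ c + b k) {T : ℕ} (hT : 1 ≤ T) :
    (1 / (T : ℝ)) * ∑ k ∈ Finset.Icc 1 T, a k ≤ c + b 0 / T := by
  have hsum : ∀ n : ℕ, ∑ k ∈ Finset.Icc 1 n, a k + b n ≤ n * c + b 0 := by
    intro n
    induction n with
    | zero => simp
    | succ n ih =>
      rw [Finset.sum_Icc_succ_top (by omega)]
      push_cast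
      linarith [hstep n]
  have hTpos : (0 : ℝ) < T := by exact_mod_cast hT
  rw [one_div_mul_eq_div, div_le_iff₀ hTpos, add_mul, div_mul_cancel₀ _ hTpos.ne']
  linarith [hsum T, hb T]

end

theorem gmm_th_RateIGMMa_general
    {E : Type*} [NormedAddCommGroup E] [NormedSpace ℝ E]
    -- `Sd = dom d`, `U = dom f` (open), `S = dom ψ`
    (Sd U S : Set E) (hSU : S ⊆ U) (hUSd : U ⊆ Sd) (hUopen : IsOpen U) (hSconv : Convex ℝ S)
    (d f ψ : E → ℝ) (d' f' : E → E →L[ℝ] ℝ)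
    (hdconv : StrictConvexOn ℝ Sd d)
    (hd' : ∀ x ∈ interior Sd, HasFDerivAt d (d' x) x)
    (hf' : ∀ x ∈ U, HasFDerivAt f (f' x) x)
    (hfconv : ConvexOn ℝ U f)
    (hψconv : ConvexOn ℝ S ψ)
    -- Bregman distance of `d`
    (β : E → E → ℝ) (hβ : ∀ x y, β x y = d y - d x - (d' x) (y - x))
    -- relative smoothness of `f` with constants `0 ≤ μ_d(f) ≤ L_d(f)`
    (μ Lf : ℝ)
    (hsmooth : ∀ x ∈ U, ∀ y ∈ U,
      μ * β x y ≤ f y - f x - (f' x) (y - x) ∧ f y - f x - (f' x) (y - x) ≤ Lf * β x y)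
    (L δ : ℝ) (hL0 : 0 < L) (hL : Lf ≤ L)
    -- the iterates of the Inexact Gradient Method with Memory
    (x : ℕ → E) (hxint : ∀ k, x k ∈ interior S)
    -- at step `k`: a bundle `z_{k,1}, …, z_{k,m_k} ∈ dom ψ` containing `x_k`
    (m : ℕ → ℕ)
    (z : (k : ℕ) → Fin (m k) → E) (hzS : ∀ k i, z k i ∈ S)
    (hxmem : ∀ k, ∃ j, z k j = x k)
    (lam : (k : ℕ) → Fin (m k) → ℝ) (hlam : ∀ k, lam k ∈ stdSimplex ℝ (Fin (m k)))
    -- `x_{k+1} = y*_L(L∇d(x_k) − G_k λ̄_k)`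
    (hsucc : ∀ k, ∀ y ∈ S,
      (L • d' (x k) - ∑ i, lam k i • f' (z k i)) y - L * d y - ψ y ≤
      (L • d' (x k) - ∑ i, lam k i • f' (z k i)) (x (k + 1)) - L * d (x (k + 1))
        - ψ (x (k + 1)))
    -- approximate stationarity: `⟨λ̄_k − λ, f_{*,k} − G_kᵀ x_{k+1}⟩ ≤ δ` for all `λ ∈ Δ_{m_k}`
    (hstat : ∀ k, ∀ ν ∈ stdSimplex ℝ (Fin (m k)),
      ∑ i, (lam k i - ν i) *
        ((f' (z k i)) (z k i) - f (z k i) - (f' (z k i)) (x (k + 1))) ≤ δ) :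
    ∀ T : ℕ, 1 ≤ T → ∀ y ∈ S,
      (1 / (T : ℝ)) * ∑ k ∈ Finset.Icc 1 T, (f (x k) + ψ (x k)) ≤
        (f y + ψ y) + (L / (T : ℝ)) * β (x 0) y + δ := by
  intro T hT y hy
  obtain rfl : β = bregman d d' := funext fun x => funext (hβ x)
  have hUint : U ⊆ interior Sd := hUopen.subset_interior_iff.mpr hUSd
  have hxS k : x k ∈ S := interior_subset (hxint k)
  have hd'x k : HasFDerivAt d (d' (x k)) (x k) := hd' _ (hUint (hSU (hxS k)))
  have hβ_nonneg k {w} (hw : w ∈ S) : 0 ≤ bregman d d' (x k) w :=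
    bregman_nonneg hdconv.convexOn (hUSd (hSU (hxS k))) (hUSd (hSU hw)) (hd'x k)
  have step k : f (x (k + 1)) + ψ (x (k + 1)) + L * bregman d d' (x (k + 1)) y ≤
      f y + ψ y + δ + L * bregman d d' (x k) y := by
    obtain ⟨j, hj⟩ := hxmem k
    have hprox := bregman_prox_three_point hSconv hψconv (hd'x (k + 1)) (hsucc k) (hxS (k + 1)) hy
    have hsmooth_k := (hsmooth _ (hSU (hxS k)) _ (hSU (hxS (k + 1)))).2.trans
      (mul_le_mul_of_nonneg_right hL (hβ_nonneg k (hxS (k + 1))))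
    have hstat_k := hstat k _ (single_mem_stdSimplex ℝ j)
    rw [sum_sub_single_mul_eq_sub_linModel, hj] at hstat_k
    have hmodel := linModel_le hfconv (fun i => hf' _ (hSU (hzS k i))) (fun i => hSU (hzS k i))
      (hSU hy) (hlam k)
    have hdiff := linModel_sub_linModel f f' (z k) (lam k) (x (k + 1)) y
    linarith
  exact (average_le_of_forall_add_succ_le (fun k => mul_nonneg hL0.le (hβ_nonneg k hy)) step
    hT).trans_eq (by ring)

/-- Theorem `th-RateIGMMa` of "Gradient Methods with Memory".

For the sequence generated by the Inexact Gradient Method with Memory with `L ≥ L_d(f)`: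
for any `T ≥ 1` and `y ∈ dom ψ`, `(1/T) Σ_{k=1}^T F(x_k) ≤ F(y) + (L/T) β_d(x_0, y) + δ`. -/
theorem gmm_th_RateIGMMa
    {E : Type*} [NormedAddCommGroup E] [NormedSpace ℝ E] [FiniteDimensional ℝ E]
    -- `Sd = dom d`, `U = dom f` (open), `S = dom ψ`
    (Sd U S : Set E) (hSU : S ⊆ U) (hUSd : U ⊆ Sd) (hUopen : IsOpen U) (hSconv : Convex ℝ S)
    (d f ψ : E → ℝ) (d' f' : E → E →L[ℝ] ℝ)
    (hdconv : StrictConvexOn ℝ Sd d)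
    (hd' : ∀ x ∈ interior Sd, HasFDerivAt d (d' x) x)
    (hf' : ∀ x ∈ U, HasFDerivAt f (f' x) x)
    (hfconv : ConvexOn ℝ U f)
    (hψconv : ConvexOn ℝ S ψ)
    -- Bregman distance of `d`
    (β : E → E → ℝ) (hβ : ∀ x y, β x y = d y - d x - (d' x) (y - x))
    -- relative smoothness of `f` with constants `0 ≤ μ_d(f) ≤ L_d(f)`
    (μ Lf : ℝ) (hμ0 : 0 ≤ μ) (hμLf : μ ≤ Lf)
    (hsmooth : ∀ x ∈ U, ∀ y ∈ U,
      μ * β x y ≤ f y - f x - (f' x) (y - x) ∧ f y - f x - (f' x) (y - x) ≤ Lf * β x y)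
    (L δ : ℝ) (hL0 : 0 < L) (hL : Lf ≤ L) (hδ : 0 ≤ δ)
    -- the iterates of the Inexact Gradient Method with Memory
    (x : ℕ → E) (hxint : ∀ k, x k ∈ interior S)
    -- at step `k`: a bundle `z_{k,1}, …, z_{k,m_k} ∈ dom ψ` containing `x_k`
    (m : ℕ → ℕ) (hm : ∀ k, 0 < m k)
    (z : (k : ℕ) → Fin (m k) → E) (hzS : ∀ k i, z k i ∈ S)
    (hxmem : ∀ k, ∃ j, z k j = x k)
    (lam : (k : ℕ) → Fin (m k) → ℝ) (hlam : ∀ k, lam k ∈ stdSimplex ℝ (Fin (m k)))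
    -- `x_{k+1} = y*_L(L∇d(x_k) − G_k λ̄_k)`
    (hsucc : ∀ k, ∀ y ∈ S,
      (L • d' (x k) - ∑ i, lam k i • f' (z k i)) y - L * d y - ψ y ≤
      (L • d' (x k) - ∑ i, lam k i • f' (z k i)) (x (k + 1)) - L * d (x (k + 1))
        - ψ (x (k + 1)))
    -- approximate stationarity: `⟨λ̄_k − λ, f_{*,k} − G_kᵀ x_{k+1}⟩ ≤ δ` for all `λ ∈ Δ_{m_k}`
    (hstat : ∀ k, ∀ ν ∈ stdSimplex ℝ (Fin (m k)),
      ∑ i, (lam k i - ν i) *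
        ((f' (z k i)) (z k i) - f (z k i) - (f' (z k i)) (x (k + 1))) ≤ δ) :
    ∀ T : ℕ, 1 ≤ T → ∀ y ∈ S,
      (1 / (T : ℝ)) * ∑ k ∈ Finset.Icc 1 T, (f (x k) + ψ (x k)) ≤
        (f y + ψ y) + (L / (T : ℝ)) * β (x 0) y + δ :=
  gmm_th_RateIGMMa_general Sd U S hSU hUSd hUopen hSconv d f ψ d' f' hdconv hd' hf' hfconv hψconv β
    hβ μ Lf hsmooth L δ hL0 hL x hxint m z hzS hxmem lam hlam hsucc hstat
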